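/- arXiv:2604.06587 — 3 statements merged into one kernel-verified Lean document; each statement's English description precedes it below -/
import Mathlib

section
/- The quaternion form of SLERP agrees with the vector form: with a = (p_a × p_b)/sin θ, one has ι(p_a)⁻¹ · ι(p_b) = cos θ − sin θ · ι(a) = exp(−θ ι(a)) in the quaternions, and for every t ∈ ℝ, ι(p_a) · exp(−tθ ι(a)) = ι(γ(t)); that is, the quaternion expression q_a (q_a⁻¹ q_b)^t (with the real power interpreted through the quaternion exponential) is the pure quaternion whose vector part is the SLERP point γ(t). -/
/-!
Pure quaternions multiply by `ι(u) ι(v) = -(u · v) + ι(u × v)`. For a unit vector `u` this gives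
`ι(u)² = -1`, hence `ι(u)⁻¹ = -ι(u)` and `exp (r ι(u)) = cos r + sin r ι(u)`. So
`ι(p_a)⁻¹ ι(p_b) = cos θ - ι(p_a × p_b)`, and since `p_a ⊥ a`, left multiplication of
`exp (-s ι(a))` by `ι(p_a)` gives `ι(cos s p_a + sin s (a × p_a))`, where `a × p_a = n` by the
vector triple product expansion.
-/

open scoped Quaternion

/-- Euclidean dot product on `ℝ³`. -/
def dot3 (u v : Fin 3 → ℝ) : ℝ := u 0 * v 0 + u 1 * v 1 + u 2 * v 2

/-- Euclidean norm on `ℝ³`. -/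
noncomputable def norm3 (u : Fin 3 → ℝ) : ℝ := Real.sqrt (dot3 u u)

/-- Cross product on `ℝ³`. -/
def cross3 (u v : Fin 3 → ℝ) : Fin 3 → ℝ :=
  ![u 1 * v 2 - u 2 * v 1, u 2 * v 0 - u 0 * v 2, u 0 * v 1 - u 1 * v 0]

/-- The pure quaternion `ι(u) = u₁ i + u₂ j + u₃ k` associated with `u ∈ ℝ³`. -/
def iota (u : Fin 3 → ℝ) : ℍ[ℝ] := ⟨0, u 0, u 1, u 2⟩

open Matrix Real

theorem dot3_eq_dotProduct (u v : Fin 3 → ℝ) : dot3 u v = u ⬝ᵥ v := by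
  simp [dot3, vec3_dotProduct]

theorem cross3_eq_crossProduct (u v : Fin 3 → ℝ) : cross3 u v = u ⨯₃ v := rfl

theorem dotProduct_self_eq_one_of_norm3_eq_one {u : Fin 3 → ℝ} (hu : norm3 u = 1) :
    u ⬝ᵥ u = 1 := by
  rwa [norm3, Real.sqrt_eq_one, dot3_eq_dotProduct] at hu

@[simp] theorem iota_zero : iota 0 = 0 := rfl

@[simp] theorem re_iota (u : Fin 3 → ℝ) : (iota u).re = 0 := rfl
@[simp] theorem imI_iota (u : Fin 3 → ℝ) : (iota u).imI = u 0 := rfl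
@[simp] theorem imJ_iota (u : Fin 3 → ℝ) : (iota u).imJ = u 1 := rfl
@[simp] theorem imK_iota (u : Fin 3 → ℝ) : (iota u).imK = u 2 := rfl

theorem iota_add (u v : Fin 3 → ℝ) : iota (u + v) = iota u + iota v := by
  ext <;> simp

theorem iota_smul (r : ℝ) (u : Fin 3 → ℝ) : iota (r • u) = r • iota u := by
  ext <;> simp

theorem iota_neg (u : Fin 3 → ℝ) : iota (-u) = -iota u := by
  ext <;> simp

theorem iota_mul_iota (u v : Fin 3 → ℝ) :
    iota u * iota v = -((u ⬝ᵥ v : ℝ) : ℍ[ℝ]) + iota (u ⨯₃ v) := by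
  ext <;> simp [vec3_dotProduct, cross_apply] <;> ring

theorem inv_iota_of_dotProduct_self_eq_one {u : Fin 3 → ℝ} (hu : u ⬝ᵥ u = 1) :
    (iota u)⁻¹ = -iota u :=
  inv_eq_of_mul_eq_one_right <| by simp [iota_mul_iota, hu, cross_self]

theorem inv_iota_mul_iota {u : Fin 3 → ℝ} (hu : u ⬝ᵥ u = 1) (v : Fin 3 → ℝ) :
    (iota u)⁻¹ * iota v = ((u ⬝ᵥ v : ℝ) : ℍ[ℝ]) - iota (u ⨯₃ v) := by
  rw [inv_iota_of_dotProduct_self_eq_one hu, neg_mul, iota_mul_iota, neg_add, neg_neg,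
    sub_eq_add_neg]

theorem norm_iota_of_dotProduct_self_eq_one {u : Fin 3 → ℝ} (hu : u ⬝ᵥ u = 1) :
    ‖iota u‖ = 1 := by
  have hnormSq : Quaternion.normSq (iota u) = u ⬝ᵥ u := by
    simp only [Quaternion.normSq_def', re_iota, imI_iota, imJ_iota, imK_iota, vec3_dotProduct]
    ring
  rw [norm_eq_sqrt_real_inner, Quaternion.inner_self, hnormSq, hu, Real.sqrt_one]

theorem exp_smul_iota {u : Fin 3 → ℝ} (hu : u ⬝ᵥ u = 1) (r : ℝ) :
    NormedSpace.exp (r • iota u) = (cos r : ℍ[ℝ]) + sin r • iota u := by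
  rw [Quaternion.exp_of_re_eq_zero _ (by simp), norm_smul, norm_iota_of_dotProduct_self_eq_one hu,
    mul_one, Real.norm_eq_abs, Real.cos_abs, smul_smul]
  congr 2
  rcases eq_or_ne r 0 with rfl | hr
  · simp
  rcases abs_cases r with ⟨h, _⟩ | ⟨h, _⟩ <;> simp [h, hr]

theorem iota_mul_exp_neg_smul_iota {u a : Fin 3 → ℝ} (ha : a ⬝ᵥ a = 1) (hua : u ⬝ᵥ a = 0)
    (s : ℝ) :
    iota u * NormedSpace.exp (-(s • iota a)) = iota (cos s • u + sin s • a ⨯₃ u) := by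
  rw [← neg_smul, exp_smul_iota ha, mul_add, Quaternion.mul_coe_eq_smul, mul_smul_comm,
    iota_mul_iota, hua, ← cross_anticomm a u, iota_neg, cos_neg, sin_neg, iota_add, iota_smul,
    iota_smul]
  simp

theorem inv_smul_cross_dotProduct_self {u v : Fin 3 → ℝ} {θ : ℝ} (hu : u ⬝ᵥ u = 1)
    (hv : v ⬝ᵥ v = 1) (huv : u ⬝ᵥ v = cos θ) (hθ : sin θ ≠ 0) :
    ((sin θ)⁻¹ • u ⨯₃ v) ⬝ᵥ ((sin θ)⁻¹ • u ⨯₃ v) = 1 := by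
  rw [smul_dotProduct, dotProduct_smul, cross_dot_cross, hu, hv, dotProduct_comm v, huv,
    smul_eq_mul, smul_eq_mul]
  field_simp
  linear_combination -sin_sq_add_cos_sq θ

/-- The quaternion form of SLERP agrees with the vector form. With
`a = (p_a × p_b)/sin θ`, one has
`ι(p_a)⁻¹ ι(p_b) = cos θ − sin θ ι(a) = exp(−θ ι(a))`, and for every `t`,
`ι(p_a) · exp(−tθ ι(a)) = ι(γ(t))`; i.e. `q_a (q_a⁻¹ q_b)^t` (real power taken via
the quaternion exponential) is the pure quaternion whose vector part is `γ(t)`. -/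
theorem quaternion_slerp_agrees_with_vector_slerp
    (pa pb : Fin 3 → ℝ) (hpa : norm3 pa = 1) (hpb : norm3 pb = 1)
    (θ : ℝ) (hθ : θ ∈ Set.Ioo 0 Real.pi) (hdot : dot3 pa pb = Real.cos θ)
    (n : Fin 3 → ℝ) (hn : n = (Real.sin θ)⁻¹ • (pb - Real.cos θ • pa))
    (γ : ℝ → Fin 3 → ℝ)
    (hγ : ∀ t : ℝ, γ t = Real.cos (t * θ) • pa + Real.sin (t * θ) • n)
    (a : Fin 3 → ℝ) (ha : a = (Real.sin θ)⁻¹ • cross3 pa pb) :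
    (iota pa)⁻¹ * iota pb = (Real.cos θ : ℍ[ℝ]) - Real.sin θ • iota a ∧
    (iota pa)⁻¹ * iota pb = NormedSpace.exp (-(θ • iota a)) ∧
    (∀ t : ℝ, iota pa * NormedSpace.exp (-((t * θ) • iota a)) = iota (γ t)) := by
  have hsin : sin θ ≠ 0 := (sin_pos_of_pos_of_lt_pi hθ.1 hθ.2).ne'
  have hpa1 := dotProduct_self_eq_one_of_norm3_eq_one hpa
  rw [dot3_eq_dotProduct] at hdot
  rw [cross3_eq_crossProduct] at ha
  have ha1 : a ⬝ᵥ a = 1 :=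
    ha ▸ inv_smul_cross_dotProduct_self hpa1 (dotProduct_self_eq_one_of_norm3_eq_one hpb) hdot hsin
  have hpa_a : pa ⬝ᵥ a = 0 := by rw [ha, dotProduct_smul, dot_self_cross, smul_zero]
  have ha_pa : a ⨯₃ pa = n := by
    rw [ha, hn, LinearMap.map_smul₂, cross_cross_eq_smul_sub_smul, hpa1, dotProduct_comm, hdot,
      one_smul]
  have hquot : (iota pa)⁻¹ * iota pb = cos θ - sin θ • iota a := by
    rw [inv_iota_mul_iota hpa1, hdot, ha, iota_smul, smul_smul, mul_inv_cancel₀ hsin, one_smul]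
  refine ⟨hquot, ?_, fun t => ?_⟩
  · rw [← neg_smul, exp_smul_iota ha1, hquot, cos_neg, sin_neg, neg_smul, sub_eq_add_neg]
  · rw [iota_mul_exp_neg_smul_iota ha1 hpa_a, ha_pa, hγ]
end

section
/- SIDER2 interpolates the middle data point at the midpoint parameter: let p₁, p₂, p₃ ∈ ℝ³ be unit vectors, and define the control points c_a = 2(p₂ · p₃) p₂ − p₃ and c_b = 2(p₁ · p₂) p₂ − p₁ (the geodesic reflections of p₃ and p₁ across p₂). Assume p₁ + c_a ≠ 0 and p₂ · (p₁ + c_a) > 0, and set A = (p₁ + c_a)/‖p₁ + c_a‖ and B = (c_b + p₃)/‖c_b + p₃‖ (the spherical midpoints of the pairs (p₁, c_a) and (c_b, p₃)). Then c_b + p₃ ≠ 0, A + B ≠ 0, and (A + B)/‖A + B‖ = p₂; that is, the spherical midpoint of A and B is exactly the middle data point p₂. -/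
lemma dot3_self_nonneg (u : Fin 3 → ℝ) : 0 ≤ dot3 u u := by
  unfold dot3; nlinarith [sq_nonneg (u 0), sq_nonneg (u 1), sq_nonneg (u 2)]

lemma dot3_self_pos {u : Fin 3 → ℝ} (h : u ≠ 0) : 0 < dot3 u u := by
  rcases lt_or_eq_of_le (dot3_self_nonneg u) with h' | h'
  · exact h'
  · exfalso; apply h; funext i
    have h0 : u 0 = 0 := by unfold dot3 at h'; nlinarith [sq_nonneg (u 0), sq_nonneg (u 1), sq_nonneg (u 2)]
    have h1 : u 1 = 0 := by unfold dot3 at h'; nlinarith [sq_nonneg (u 0), sq_nonneg (u 1), sq_nonneg (u 2)]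
    have h2 : u 2 = 0 := by unfold dot3 at h'; nlinarith [sq_nonneg (u 0), sq_nonneg (u 1), sq_nonneg (u 2)]
    fin_cases i <;> simpa

lemma norm3_smul (c : ℝ) (u : Fin 3 → ℝ) : norm3 (c • u) = |c| * norm3 u := by
  unfold norm3
  have : dot3 (c • u) (c • u) = c ^ 2 * dot3 u u := by
    simp [dot3, Pi.smul_apply, smul_eq_mul]; ring
  rw [this, Real.sqrt_mul (sq_nonneg c), Real.sqrt_sq_eq_abs]

/-- SIDER2 interpolates the middle data point at the midpoint
parameter: with control points `c_a = 2(p₂·p₃)p₂ − p₃` and `c_b = 2(p₁·p₂)p₂ − p₁`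
(the geodesic reflections of `p₃` and `p₁` across `p₂`), and spherical midpoints
`A = (p₁ + c_a)/‖p₁ + c_a‖`, `B = (c_b + p₃)/‖c_b + p₃‖`, one has `c_b + p₃ ≠ 0`,
`A + B ≠ 0`, and `(A + B)/‖A + B‖ = p₂`. -/
theorem sider2_interpolates_middle_point
    (p₁ p₂ p₃ : Fin 3 → ℝ)
    (h₁ : norm3 p₁ = 1) (h₂ : norm3 p₂ = 1) (h₃ : norm3 p₃ = 1)
    (ca cb : Fin 3 → ℝ)
    (hca : ca = (2 * dot3 p₂ p₃) • p₂ - p₃)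
    (hcb : cb = (2 * dot3 p₁ p₂) • p₂ - p₁)
    (hne : p₁ + ca ≠ 0) (hpos : dot3 p₂ (p₁ + ca) > 0)
    (A B : Fin 3 → ℝ)
    (hA : A = (norm3 (p₁ + ca))⁻¹ • (p₁ + ca))
    (hB : B = (norm3 (cb + p₃))⁻¹ • (cb + p₃)) :
    cb + p₃ ≠ 0 ∧ A + B ≠ 0 ∧ (norm3 (A + B))⁻¹ • (A + B) = p₂ := by
  set v := p₁ + ca with hv
  set w := cb + p₃ with hwdef
  set s := dot3 p₂ v with hs
  have hp2 : dot3 p₂ p₂ = 1 := Real.sqrt_eq_one.mp h₂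
  have hp2' : p₂ 0 * p₂ 0 + p₂ 1 * p₂ 1 + p₂ 2 * p₂ 2 = 1 := hp2
  have hw : w = (2 * s) • p₂ - v := by
    funext i
    simp only [hwdef, hv, hs, hca, hcb, dot3, Pi.add_apply, Pi.sub_apply, Pi.smul_apply,
      smul_eq_mul]
    linear_combination (-(4:ℝ) * (p₂ 0 * p₃ 0 + p₂ 1 * p₃ 1 + p₂ 2 * p₃ 2) * p₂ i) * hp2'
  have hdotw : dot3 w w = dot3 v v := by
    rw [hw]
    simp only [hs, dot3, Pi.sub_apply, Pi.smul_apply, smul_eq_mul]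
    linear_combination ((4:ℝ) * (p₂ 0 * v 0 + p₂ 1 * v 1 + p₂ 2 * v 2) ^ 2) * hp2'
  have hvpos : 0 < dot3 v v := dot3_self_pos hne
  have hwne : w ≠ 0 := by
    intro h
    have h0 : dot3 w w = 0 := by rw [h]; simp [dot3]
    rw [hdotw] at h0
    exact absurd h0.symm (ne_of_lt hvpos)
  have hn : norm3 w = norm3 v := by unfold norm3; rw [hdotw]
  have hnv : 0 < norm3 v := Real.sqrt_pos.mpr hvpos
  have hvw : v + w = (2 * s) • p₂ := by rw [hw]; abel
  have hAB : A + B = ((2 * s) * (norm3 v)⁻¹) • p₂ := by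
    rw [hA, hB, hn, ← smul_add, hvw, smul_smul, mul_comm]
  have hspos : 0 < s := hpos
  have hcoef : 0 < (2 * s) * (norm3 v)⁻¹ := by positivity
  have hp2ne : p₂ ≠ 0 := by
    intro h; rw [h] at hp2; simp [dot3] at hp2
  refine ⟨hwne, ?_, ?_⟩
  · rw [hAB]
    exact smul_ne_zero (ne_of_gt hcoef) hp2ne
  · rw [hAB, norm3_smul, h₂, abs_of_pos hcoef, smul_smul, mul_one,
      inv_mul_cancel₀ (ne_of_gt hcoef), one_smul]
end

section
/- Let p_a, p_b ∈ ℝ³ be unit vectors with p_a · p_b = cos θ for some θ ∈ (0, π), let λ ∈ (0, 1/2), and set q_λ = (1 − λ) p_a + λ p_b. Then q_λ ≠ 0, and the geodesic distance on the unit sphere from p_a to the radial projection q_λ/‖q_λ‖ is strictly less than λθ; that is, arccos(p_a · (q_λ/‖q_λ‖)) < λθ. Hence a uniform partition of the straight segment joining p_a and p_b, projected radially onto the sphere, yields points that lie closer (in geodesic distance) to the endpoint p_a than the corresponding uniform geodesic partition. -/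
set_option maxHeartbeats 1000000

/-- `sin x / x` is strictly decreasing: for `0 < a < b ≤ π`, `a sin b < b sin a`. -/
lemma aux_sin_ratio (a b : ℝ) (ha : 0 < a) (hab : a < b) (hb : b ≤ Real.pi) :
    a * Real.sin b < b * Real.sin a := by
  have hb0 : (0:ℝ) < b := ha.trans hab
  have h := strictConcaveOn_sin_Icc.2 (x := 0) (y := b)
    (Set.left_mem_Icc.mpr Real.pi_pos.le) (Set.mem_Icc.mpr ⟨hb0.le, hb⟩) hb0.ne
    (show (0:ℝ) < 1 - a / b by rw [sub_pos]; exact (div_lt_one hb0).mpr hab)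
    (show (0:ℝ) < a / b by positivity) (by ring)
  simp only [smul_eq_mul, Real.sin_zero, mul_zero, zero_add] at h
  rw [div_mul_cancel₀ a hb0.ne'] at h
  calc a * Real.sin b = b * (a / b * Real.sin b) := by field_simp
    _ < b * Real.sin a := (mul_lt_mul_iff_right₀ hb0).mpr h

/-- For unit vectors `p_a, p_b` with `p_a · p_b = cos θ`, `θ ∈ (0, π)`,
and `λ ∈ (0, 1/2)`, the point `q_λ = (1 − λ) p_a + λ p_b` is nonzero, and the
geodesic distance from `p_a` to the radial projection `q_λ/‖q_λ‖` is strictly less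
than `λθ`: `arccos(p_a · (q_λ/‖q_λ‖)) < λθ`. -/
theorem projected_chord_partition_biased_toward_endpoints
    (pa pb : Fin 3 → ℝ) (hpa : norm3 pa = 1) (hpb : norm3 pb = 1)
    (θ : ℝ) (hθ : θ ∈ Set.Ioo 0 Real.pi) (hdot : dot3 pa pb = Real.cos θ)
    (l : ℝ) (hl : l ∈ Set.Ioo 0 (1 / 2 : ℝ))
    (q : Fin 3 → ℝ) (hq : q = (1 - l) • pa + l • pb) :
    q ≠ 0 ∧ Real.arccos (dot3 pa ((norm3 q)⁻¹ • q)) < l * θ := by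
  obtain ⟨hθ0, hθπ⟩ := hθ
  obtain ⟨hl0, hl2⟩ := hl
  have hpaa : dot3 pa pa = 1 := Real.sqrt_eq_one.mp hpa
  have hpbb : dot3 pb pb = 1 := Real.sqrt_eq_one.mp hpb
  have hc1 : -1 < Real.cos θ := by
    have := Real.cos_lt_cos_of_nonneg_of_le_pi hθ0.le le_rfl hθπ
    rwa [Real.cos_pi] at this
  have hpyθ : Real.sin θ ^ 2 + Real.cos θ ^ 2 = 1 := Real.sin_sq_add_cos_sq θ
  -- dot products
  have hPA : dot3 pa q = 1 - l * (1 - Real.cos θ) := by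
    subst hq
    simp only [dot3] at hpaa hdot ⊢
    simp only [Pi.add_apply, Pi.smul_apply, smul_eq_mul]
    linear_combination (1 - l) * hpaa + l * hdot
  have hQQ : dot3 q q = 1 - 2 * l * (1 - l) * (1 - Real.cos θ) := by
    subst hq
    simp only [dot3] at hpaa hpbb hdot ⊢
    simp only [Pi.add_apply, Pi.smul_apply, smul_eq_mul]
    linear_combination (1 - l) ^ 2 * hpaa + l ^ 2 * hpbb + 2 * l * (1 - l) * hdot
  have hQQpos : 0 < dot3 q q := by
    rw [hQQ]
    linarith [mul_nonneg (mul_nonneg hl0.le (by linarith : (0:ℝ) ≤ 1 - l))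
        (by linarith : (0:ℝ) ≤ 1 + Real.cos θ),
      mul_pos (show (0:ℝ) < 1 - 2 * l by linarith)
        (show (0:ℝ) < 1 - 2 * l by linarith)]
  have hq0 : q ≠ 0 := by
    intro h
    rw [h] at hQQpos
    simp [dot3] at hQQpos
  have hN : 0 < norm3 q := Real.sqrt_pos.mpr hQQpos
  have hN2 : norm3 q ^ 2 = dot3 q q := Real.sq_sqrt hQQpos.le
  -- trig setup
  set sa := Real.sin (l * θ) with hsa_def
  set ca := Real.cos (l * θ) with hca_def
  set sb := Real.sin ((1 - l) * θ) with hsb_def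
  set cb := Real.cos ((1 - l) * θ) with hcb_def
  have hsum : l * θ + (1 - l) * θ = θ := by ring
  have h1 : Real.cos θ = ca * cb - sa * sb := by rw [← hsum, Real.cos_add]
  have h2 : Real.sin θ = sa * cb + ca * sb := by rw [← hsum, Real.sin_add]
  have hlθ0 : 0 < l * θ := mul_pos hl0 hθ0
  have hlθ2 : l * θ < Real.pi / 2 := by
    linarith [mul_pos (show (0:ℝ) < 1 / 2 - l by linarith) hθ0]
  have hab : l * θ < (1 - l) * θ := by
    linarith [mul_pos (show (0:ℝ) < 1 - 2 * l by linarith) hθ0]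
  have hbπ : (1 - l) * θ ≤ Real.pi := by linarith [mul_pos hl0 hθ0]
  have hsa : 0 < sa := Real.sin_pos_of_pos_of_lt_pi hlθ0 (by linarith [Real.pi_pos])
  have hca : 0 < ca := Real.cos_pos_of_mem_Ioo ⟨by linarith [Real.pi_pos], hlθ2⟩
  have hsb : 0 < sb := Real.sin_pos_of_pos_of_lt_pi
    (mul_pos (by linarith) hθ0) (by linarith [mul_pos hl0 hθ0])
  have hs : 0 < Real.sin θ := Real.sin_pos_of_pos_of_lt_pi hθ0 hθπ
  have hpya : sa ^ 2 + ca ^ 2 = 1 := Real.sin_sq_add_cos_sq (l * θ)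
  have hpyb : sb ^ 2 + cb ^ 2 = 1 := Real.sin_sq_add_cos_sq ((1 - l) * θ)
  -- D > 0 from sin x / x decreasing
  have hD : 0 < (1 - l) * θ * sa - l * θ * sb := by
    have := aux_sin_ratio (l * θ) ((1 - l) * θ) hlθ0 hab hbπ
    linarith
  -- key fact: sb + sa * cos θ = ca * sin θ
  have hkey : sb + sa * Real.cos θ = ca * Real.sin θ := by
    rw [h1, h2]; linear_combination (-sb) * hpya
  -- F > 0
  have hF : 0 < l * θ * sb + (1 - l) * θ * sa + 2 * (l * θ) * sa * Real.cos θ := by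
    have h3 : 0 < l * θ * (sb + sa * Real.cos θ) := by
      rw [hkey]; positivity
    linarith [h3, mul_pos (mul_pos hθ0 hsa) (by linarith : (0:ℝ) < 1 - 2 * l),
      mul_nonneg (mul_nonneg (mul_nonneg hl0.le hθ0.le) hsa.le)
        (by linarith : (0:ℝ) ≤ 1 + Real.cos θ)]
  -- the identity E = D * F
  have hE : sa ^ 2 * ((l * θ) ^ 2 + ((1 - l) * θ) ^ 2
        + 2 * (l * θ) * ((1 - l) * θ) * Real.cos θ)
      - (l * θ) ^ 2 * Real.sin θ ^ 2
      = ((1 - l) * θ * sa - l * θ * sb)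
        * (l * θ * sb + (1 - l) * θ * sa + 2 * (l * θ) * sa * Real.cos θ) := by
    rw [h1, h2]
    linear_combination (-(l * θ) ^ 2 * sb ^ 2) * hpya + (-(l * θ) ^ 2 * sa ^ 2) * hpyb
  have hpos : 0 < sa ^ 2 * ((l * θ) ^ 2 + ((1 - l) * θ) ^ 2
        + 2 * (l * θ) * ((1 - l) * θ) * Real.cos θ)
      - (l * θ) ^ 2 * Real.sin θ ^ 2 := by
    rw [hE]; exact mul_pos hD hF
  -- sa² N² > l² sin²θ
  have hkey2 : (l * Real.sin θ) ^ 2 < sa ^ 2 * norm3 q ^ 2 := by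
    have hX : 0 < sa ^ 2 * (1 - 2 * l * (1 - l) * (1 - Real.cos θ))
        - (l * Real.sin θ) ^ 2 := by
      have hiden : θ ^ 2 * (sa ^ 2 * (1 - 2 * l * (1 - l) * (1 - Real.cos θ))
          - (l * Real.sin θ) ^ 2)
          = sa ^ 2 * ((l * θ) ^ 2 + ((1 - l) * θ) ^ 2
            + 2 * (l * θ) * ((1 - l) * θ) * Real.cos θ)
          - (l * θ) ^ 2 * Real.sin θ ^ 2 := by ring
      have hp2 : 0 < θ ^ 2 * (sa ^ 2 * (1 - 2 * l * (1 - l) * (1 - Real.cos θ))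
          - (l * Real.sin θ) ^ 2) := by rw [hiden]; exact hpos
      rcases mul_pos_iff.1 hp2 with ⟨_, h⟩ | ⟨h, _⟩
      · exact h
      · exact absurd h (by positivity : (0:ℝ) ≤ θ ^ 2).not_gt
    rw [hN2, hQQ]
    linarith [hX]
  -- P > 0
  have hP : 0 < dot3 pa q := by
    rw [hPA]
    linarith [mul_nonneg hl0.le (by linarith : (0:ℝ) ≤ 1 + Real.cos θ)]
  -- P² - (ca N)² = sa² N² - l² sin²θ
  have expand : dot3 pa q ^ 2 - (ca * norm3 q) ^ 2
      = sa ^ 2 * norm3 q ^ 2 - (l * Real.sin θ) ^ 2 := by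
    rw [mul_pow, hN2, hQQ, hPA]
    linear_combination (-(1 - 2 * l * (1 - l) * (1 - Real.cos θ))) * hpya + l ^ 2 * hpyθ
  have hsq : (ca * norm3 q) ^ 2 < dot3 pa q ^ 2 := by linarith [hkey2, expand]
  have hlt : ca * norm3 q < dot3 pa q := lt_of_pow_lt_pow_left₀ 2 hP.le hsq
  -- P < N
  have hPN : dot3 pa q < norm3 q := by
    have h5 : dot3 pa q ^ 2 < norm3 q ^ 2 := by
      rw [hPA, hN2, hQQ]
      have hPNiden : (1 - 2 * l * (1 - l) * (1 - Real.cos θ))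
          - (1 - l * (1 - Real.cos θ)) ^ 2 = l ^ 2 * Real.sin θ ^ 2 := by
        linear_combination (-l ^ 2) * hpyθ
      linarith [hPNiden, mul_pos (mul_pos hl0 hl0) (mul_pos hs hs)]
    exact lt_of_pow_lt_pow_left₀ 2 hN.le h5
  -- conclude
  refine ⟨hq0, ?_⟩
  have hdot_scale : dot3 pa ((norm3 q)⁻¹ • q) = (norm3 q)⁻¹ * dot3 pa q := by
    simp only [dot3, Pi.smul_apply, smul_eq_mul]; ring
  rw [hdot_scale]
  have hcalt : ca < (norm3 q)⁻¹ * dot3 pa q := by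
    rw [lt_inv_mul_iff₀ hN]; linarith [hlt]
  have hx1 : (norm3 q)⁻¹ * dot3 pa q < 1 := by
    have := mul_lt_mul_of_pos_left hPN (inv_pos.mpr hN)
    rwa [inv_mul_cancel₀ hN.ne'] at this
  have harccos : Real.arccos ((norm3 q)⁻¹ * dot3 pa q) < Real.arccos ca :=
    Real.strictAntiOn_arccos
      (Set.mem_Icc.mpr ⟨Real.neg_one_le_cos (l * θ), Real.cos_le_one (l * θ)⟩)
      (Set.mem_Icc.mpr ⟨by linarith [Real.neg_one_le_cos (l * θ)], hx1.le⟩) hcalt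
  calc Real.arccos ((norm3 q)⁻¹ * dot3 pa q) < Real.arccos ca := harccos
    _ = l * θ := Real.arccos_cos hlθ0.le (by linarith [Real.pi_pos])
end
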